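/- arXiv:1702.06443 — 2 statements merged into one kernel-verified Lean document; each statement's English description precedes it below -/
import Mathlib

section
/- If φ : ℝ^d → ℝ is continuous with compact support and has local linear independence on every open set, and f ∈ V(φ) has connected graph 𝒢_f, then f is nonseparable. -/
/-! Local linear independence on `ℝ^d` makes the coefficients of `f ∈ V(φ)` unique, so a splitting
`f = f₁ + f₂` splits the vertices of `𝒢_f` into the coefficient supports of `f₁` and `f₂`. If
`f₁ f₂ ≡ 0`, then `f₂` vanishes on the open set `{f₁ ≠ 0}`, so by local linear independence there
every translate in the expansion of `f₂` vanishes on it. Hence `f₁` vanishes on the open set where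
such a translate is nonzero, and so, again by local linear independence, does every translate in
the expansion of `f₁`. So the two parts are disjoint and no edge of `𝒢_f` joins them. -/

/-- The signal `Σ_k c(k) φ(·−k)` in the shift-invariant space `V(φ)`. -/
noncomputable def sig (d : ℕ) (φ : (Fin d → ℝ) → ℝ) (c : (Fin d → ℤ) → ℝ) :
    (Fin d → ℝ) → ℝ :=
  fun x => ∑' k : Fin d → ℤ, c k * φ (fun i => x i - k i)

/-- `f = Σ_k c(k) φ(·−k)` is nonseparable. -/
def Nonseparable (d : ℕ) (φ : (Fin d → ℝ) → ℝ) (c : (Fin d → ℤ) → ℝ) : Prop :=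
  ¬ ∃ c₁ c₂ : (Fin d → ℤ) → ℝ,
      sig d φ c₁ ≠ 0 ∧ sig d φ c₂ ≠ 0 ∧
      (∀ x, sig d φ c x = sig d φ c₁ x + sig d φ c₂ x) ∧
      (∀ x, sig d φ c₁ x * sig d φ c₂ x = 0)

/-- Adjacency relation of the graph `𝒢_f`. -/
def GraphAdj (d : ℕ) (φ : (Fin d → ℝ) → ℝ) (c : (Fin d → ℤ) → ℝ)
    (k k' : Fin d → ℤ) : Prop :=
  k ≠ k' ∧ c k ≠ 0 ∧ c k' ≠ 0 ∧
    ∃ x : Fin d → ℝ, φ (fun i => x i - k i) * φ (fun i => x i - k' i) ≠ 0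

/-- `φ` has local linear independence on the open set `A`. -/
def LocLinIndep (d : ℕ) (φ : (Fin d → ℝ) → ℝ) (A : Set (Fin d → ℝ)) : Prop :=
  ∀ c : (Fin d → ℤ) → ℝ, (∀ x ∈ A, sig d φ c x = 0) →
    ∀ k : Fin d → ℤ, (¬ ∀ x ∈ A, φ (fun i => x i - k i) = 0) → c k = 0

section

variable {d : ℕ} {φ : (Fin d → ℝ) → ℝ}

lemma locallyFinite_support_translate (hsupp : HasCompactSupport φ) :
    LocallyFinite fun k : Fin d → ℤ =>
      Function.support fun x : Fin d → ℝ => φ (fun i => x i - k i) := by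
  obtain ⟨R, hR⟩ : ∃ R, tsupport φ ⊆ Metric.closedBall 0 R :=
    hsupp.isCompact.isBounded.subset_closedBall 0
  intro x
  refine ⟨Metric.closedBall x 1, Metric.closedBall_mem_nhds x one_pos, ?_⟩
  refine (Fintype.piFinset fun i =>
    Finset.Icc ⌈x i - (R + 1)⌉ ⌊x i + (R + 1)⌋).finite_toSet.subset ?_
  rintro k ⟨y, hy, hyx⟩
  have hyR : dist (fun i => y i - k i) 0 ≤ R := hR (subset_tsupport _ hy)
  rw [Finset.mem_coe, Fintype.mem_piFinset]
  intro i
  have h1 : |y i - k i| ≤ R := by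
    simpa [Real.dist_eq] using (dist_le_pi_dist _ _ i).trans hyR
  have h2 : |y i - x i| ≤ 1 := by
    simpa [Real.dist_eq] using (dist_le_pi_dist y x i).trans (Metric.mem_closedBall.1 hyx)
  rw [abs_le] at h1 h2
  rw [Finset.mem_Icc, Int.ceil_le, Int.le_floor]
  constructor <;> linarith

lemma hasFiniteSupport_sig_term (hsupp : HasCompactSupport φ) (a : (Fin d → ℤ) → ℝ)
    (x : Fin d → ℝ) :
    Function.HasFiniteSupport fun k => a k * φ (fun i => x i - k i) :=
  ((locallyFinite_support_translate hsupp).point_finite x).subset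
    fun _ hk => right_ne_zero_of_mul hk

lemma continuous_sig (hcont : Continuous φ) (hsupp : HasCompactSupport φ)
    (a : (Fin d → ℤ) → ℝ) : Continuous (sig d φ a) := by
  have hsig : sig d φ a = fun x => ∑ᶠ k, a k * φ (fun i => x i - k i) :=
    funext fun x => tsum_eq_finsum (hasFiniteSupport_sig_term hsupp a x)
  rw [hsig]
  refine continuous_finsum (fun k => continuous_const.mul (hcont.comp ?_))
    ((locallyFinite_support_translate hsupp).subset fun k => Function.support_mul_subset_right _ _)
  fun_prop

lemma sig_sub (hsupp : HasCompactSupport φ) (a b : (Fin d → ℤ) → ℝ) (x : Fin d → ℝ) :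
    sig d φ (a - b) x = sig d φ a x - sig d φ b x := by
  simp only [sig, Pi.sub_apply, sub_mul]
  exact Summable.tsum_sub (summable_of_hasFiniteSupport (hasFiniteSupport_sig_term hsupp a x))
    (summable_of_hasFiniteSupport (hasFiniteSupport_sig_term hsupp b x))

lemma sig_add (hsupp : HasCompactSupport φ) (a b : (Fin d → ℤ) → ℝ) (x : Fin d → ℝ) :
    sig d φ (a + b) x = sig d φ a x + sig d φ b x := by
  simp only [sig, Pi.add_apply, add_mul]
  exact Summable.tsum_add (summable_of_hasFiniteSupport (hasFiniteSupport_sig_term hsupp a x))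
    (summable_of_hasFiniteSupport (hasFiniteSupport_sig_term hsupp b x))

lemma ne_zero_of_sig_ne_zero {a : (Fin d → ℤ) → ℝ} (h : sig d φ a ≠ 0) : φ ≠ 0 ∧ a ≠ 0 := by
  constructor <;> rintro rfl <;> exact h (funext fun x => by simp [sig])

lemma LocLinIndep.translate_eq_zero {A : Set (Fin d → ℝ)} (hA : LocLinIndep d φ A)
    {a : (Fin d → ℤ) → ℝ} (ha : ∀ x ∈ A, sig d φ a x = 0) {k : Fin d → ℤ} (hk : a k ≠ 0) :
    ∀ x ∈ A, φ (fun i => x i - k i) = 0 :=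
  not_not.1 fun h => hk (hA a ha k h)

lemma LocLinIndep.coeff_eq_of_sig_eq (hA : LocLinIndep d φ Set.univ)
    (hsupp : HasCompactSupport φ) (hφ : φ ≠ 0) {a b : (Fin d → ℤ) → ℝ}
    (h : ∀ x, sig d φ a x = sig d φ b x) : a = b := by
  obtain ⟨z, hz⟩ := Function.ne_iff.1 hφ
  refine funext fun k => sub_eq_zero.1 (by_contra fun hk => hz ?_)
  simpa using hA.translate_eq_zero (a := a - b) (fun x _ => by rw [sig_sub hsupp, h, sub_self])
    hk (fun i => z i + k i) trivial

lemma translate_mul_translate_eq_zero (hcont : Continuous φ) (hsupp : HasCompactSupport φ)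
    (hLLI : ∀ A : Set (Fin d → ℝ), IsOpen A → LocLinIndep d φ A) {c₁ c₂ : (Fin d → ℤ) → ℝ}
    (hmul : ∀ x, sig d φ c₁ x * sig d φ c₂ x = 0) {k k' : Fin d → ℤ} (hk : c₁ k ≠ 0)
    (hk' : c₂ k' ≠ 0) (x : Fin d → ℝ) :
    φ (fun i => x i - k i) * φ (fun i => x i - k' i) = 0 := by
  have hk'_zero : ∀ y ∈ {y : Fin d → ℝ | sig d φ c₁ y ≠ 0}, φ (fun i => y i - k' i) = 0 :=
    (hLLI _ (isOpen_ne_fun (continuous_sig hcont hsupp c₁) continuous_const)).translate_eq_zero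
      (fun y hy => (mul_eq_zero.1 (hmul y)).resolve_left hy) hk'
  have hk_zero : ∀ y ∈ {y : Fin d → ℝ | φ (fun i => y i - k' i) ≠ 0}, φ (fun i => y i - k i) = 0 :=
    (hLLI _ (isOpen_ne_fun (by fun_prop) continuous_const)).translate_eq_zero
      (fun y hy => not_not.1 fun h => hy (hk'_zero y h)) hk
  by_contra h
  exact left_ne_zero_of_mul h (hk_zero x (right_ne_zero_of_mul h))

lemma coeff_eq_zero_of_sig_mul_eq_zero (hcont : Continuous φ) (hsupp : HasCompactSupport φ)
    (hLLI : ∀ A : Set (Fin d → ℝ), IsOpen A → LocLinIndep d φ A) (hφ : φ ≠ 0)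
    {c₁ c₂ : (Fin d → ℤ) → ℝ} (hmul : ∀ x, sig d φ c₁ x * sig d φ c₂ x = 0) {k : Fin d → ℤ}
    (hk : c₁ k ≠ 0) : c₂ k = 0 := by
  obtain ⟨z, hz⟩ := Function.ne_iff.1 hφ
  by_contra hk'
  exact hz (by
    simpa using translate_mul_translate_eq_zero hcont hsupp hLLI hmul hk hk' (fun i => z i + k i))

end

/-- if `φ` is continuous with compact support and locally linearly
independent on every open set, and the graph `𝒢_f` of `f = Σ_k c(k) φ(·−k)` is
connected, then `f` is nonseparable. -/
theorem stmt2 (d : ℕ) (φ : (Fin d → ℝ) → ℝ)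
    (hcont : Continuous φ) (hsupp : HasCompactSupport φ)
    (hLLI : ∀ A : Set (Fin d → ℝ), IsOpen A → LocLinIndep d φ A)
    (c : (Fin d → ℤ) → ℝ)
    (hconn : ∀ k k' : Fin d → ℤ, c k ≠ 0 → c k' ≠ 0 →
      Relation.ReflTransGen (GraphAdj d φ c) k k') :
    Nonseparable d φ c := by
  rintro ⟨c₁, c₂, h₁, h₂, hadd, hmul⟩
  obtain ⟨hφ, hc₁⟩ := ne_zero_of_sig_ne_zero h₁
  obtain ⟨k₁, hk₁⟩ := Function.ne_iff.1 hc₁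
  obtain ⟨k₂, hk₂⟩ := Function.ne_iff.1 (ne_zero_of_sig_ne_zero h₂).2
  have hc : c = c₁ + c₂ :=
    (hLLI _ isOpen_univ).coeff_eq_of_sig_eq hsupp hφ fun x => by rw [hadd, sig_add hsupp]
  have hdisj {k} : c₁ k ≠ 0 → c₂ k = 0 :=
    coeff_eq_zero_of_sig_mul_eq_zero hcont hsupp hLLI hφ hmul
  have hside {a b} (hab : Relation.ReflTransGen (GraphAdj d φ c) a b) : c₁ a ≠ 0 → c₁ b ≠ 0 := by
    induction hab with
    | refl => exact id
    | tail _ hbb' ih =>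
      obtain ⟨-, -, hcb', x, hx⟩ := hbb'
      refine fun ha hb' => hx (translate_mul_translate_eq_zero hcont hsupp hLLI hmul (ih ha) ?_ x)
      simpa [hc, hb'] using hcb'
  have hck₁ : c k₁ ≠ 0 := by simpa [hc, hdisj hk₁] using hk₁
  have hc₁k₂ : c₁ k₂ = 0 := not_not.1 (mt hdisj hk₂)
  have hck₂ : c k₂ ≠ 0 := by simpa [hc, hc₁k₂] using hk₂
  exact hside (hconn k₁ k₂ hck₁ hck₂) hk₁ hc₁k₂
end

section
/- With φ₀, f₁, f₂ as in the previous context, the two signals f₁ + 2f₂ and f₁ − 2f₂ have the same magnitude on ℝ, i.e., |f₁(t)+2f₂(t)| = |f₁(t)−2f₂(t)| for all t ∈ ℝ, but f₁ + 2f₂ is not equal to f₁ − 2f₂ and not equal to −(f₁ − 2f₂); hence f₁ + 2f₂ is not determined up to a sign by its magnitude measurements on ℝ. -/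
/-- The hat function `h(t) = max(1 − |t|, 0)`, supported on `[−1, 1]`. -/
noncomputable def hatFn (t : ℝ) : ℝ := max (1 - |t|) 0

/-- `φ₀(t) = h(4t−1) + h(4t−3) + h(4t−5) − h(4t−7)`. -/
noncomputable def φ₀ (t : ℝ) : ℝ :=
  hatFn (4 * t - 1) + hatFn (4 * t - 3) + hatFn (4 * t - 5) - hatFn (4 * t - 7)

/-- `f₁(t) = Σ_{k∈ℤ} φ₀(t − k)`. -/
noncomputable def f₁ (t : ℝ) : ℝ := ∑' k : ℤ, φ₀ (t - (k : ℝ))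

/-- `f₂(t) = Σ_{k∈ℤ} (−1)^k φ₀(t − k)`. -/
noncomputable def f₂ (t : ℝ) : ℝ := ∑' k : ℤ, (-1 : ℝ) ^ k * φ₀ (t - (k : ℝ))

/-!
Both `f₁` and `f₂` are periodisations of `φ₀`, which lives on `(0, 2)`, so on `[n, n + 1)` only the
translates by `n - 1` and `n` contribute. Writing `s` for the fractional part of `t`,
`a = h(4s − 1)` and `b = h(4s − 3)`, one gets `φ₀(s) = a + b` and `φ₀(s + 1) = a − b`, hence
`f₁(t) = 2a` and `f₂(t) = ±2b`. The bumps `a` and `b` have disjoint supports, so `f₁ f₂ = 0` and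
`|f₁ + 2f₂| = |f₁ − 2f₂|`. At `t = 3/4` we have `f₁ = 0`, `f₂ = 2`, and at `t = 1/4` we have
`f₁ = 2`, `f₂ = 0`, which rules out both `f₁ + 2f₂ = f₁ − 2f₂` and `f₁ + 2f₂ = −(f₁ − 2f₂)`.
-/

theorem abs_add_eq_abs_sub_of_mul_eq_zero {α : Type*} [Ring α] [LinearOrder α]
    [IsStrictOrderedRing α] {a b : α} (h : a * b = 0) : |a + b| = |a - b| := by
  rcases mul_eq_zero.mp h with rfl | rfl
  · rw [zero_add, zero_sub, abs_neg]
  · rw [add_zero, sub_zero]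

theorem tsum_mul_sub_intCast_eq_of_support_subset {φ : ℝ → ℝ}
    (hφ : Function.support φ ⊆ Set.Ioo 0 2) (c : ℤ → ℝ) (t : ℝ) :
    ∑' k : ℤ, c k * φ (t - k) =
      c (⌊t⌋ - 1) * φ (Int.fract t + 1) + c ⌊t⌋ * φ (Int.fract t) := by
  have hfract := Int.self_sub_floor t
  have h0 := Int.fract_nonneg t
  have h1 := Int.fract_lt_one t
  have hvanish : ∀ k ∉ ({⌊t⌋ - 1, ⌊t⌋} : Finset ℤ), c k * φ (t - k) = 0 := by
    intro k hk
    simp only [Finset.mem_insert, Finset.mem_singleton, not_or] at hk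
    suffices t - k ∉ Set.Ioo (0 : ℝ) 2 by
      rw [Function.notMem_support.mp (fun h => this (hφ h)), mul_zero]
    rcases (by omega : k ≤ ⌊t⌋ - 2 ∨ ⌊t⌋ + 1 ≤ k) with hk | hk
    · have : (k : ℝ) ≤ ⌊t⌋ - 2 := by exact_mod_cast hk
      exact fun h => by linarith [h.2]
    · have : (⌊t⌋ : ℝ) + 1 ≤ k := by exact_mod_cast hk
      exact fun h => by linarith [h.1]
  rw [tsum_eq_sum hvanish, Finset.sum_pair (by omega), ← hfract]
  push_cast
  ring_nf

theorem hatFn_eq_zero_of_le_neg_one {x : ℝ} (hx : x ≤ -1) : hatFn x = 0 := by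
  rw [hatFn, abs_of_neg (by linarith)]
  exact max_eq_right (by linarith)

theorem hatFn_eq_zero_of_one_le {x : ℝ} (hx : 1 ≤ x) : hatFn x = 0 := by
  rw [hatFn, abs_of_pos (by linarith)]
  exact max_eq_right (by linarith)

theorem hatFn_mul_hatFn_eq_zero {x y : ℝ} (h : y + 2 ≤ x) : hatFn x * hatFn y = 0 := by
  rcases le_total x 1 with hx | hx
  · rw [hatFn_eq_zero_of_le_neg_one (x := y) (by linarith), mul_zero]
  · rw [hatFn_eq_zero_of_one_le hx, zero_mul]

theorem support_φ₀_subset : Function.support φ₀ ⊆ Set.Ioo 0 2 := by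
  intro s hs
  by_contra hs'
  rcases not_and_or.mp hs' with h | h <;> push Not at h <;> apply hs
  · simp only [φ₀, hatFn_eq_zero_of_le_neg_one (by linarith : 4 * s - 1 ≤ -1),
      hatFn_eq_zero_of_le_neg_one (by linarith : 4 * s - 3 ≤ -1),
      hatFn_eq_zero_of_le_neg_one (by linarith : 4 * s - 5 ≤ -1),
      hatFn_eq_zero_of_le_neg_one (by linarith : 4 * s - 7 ≤ -1)]
    ring
  · simp only [φ₀, hatFn_eq_zero_of_one_le (by linarith : 1 ≤ 4 * s - 1),
      hatFn_eq_zero_of_one_le (by linarith : 1 ≤ 4 * s - 3),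
      hatFn_eq_zero_of_one_le (by linarith : 1 ≤ 4 * s - 5),
      hatFn_eq_zero_of_one_le (by linarith : 1 ≤ 4 * s - 7)]
    ring

theorem φ₀_of_le_one {s : ℝ} (hs : s ≤ 1) : φ₀ s = hatFn (4 * s - 1) + hatFn (4 * s - 3) := by
  rw [φ₀, hatFn_eq_zero_of_le_neg_one (x := 4 * s - 5) (by linarith),
    hatFn_eq_zero_of_le_neg_one (x := 4 * s - 7) (by linarith)]
  ring

theorem φ₀_add_one {s : ℝ} (hs : 0 ≤ s) :
    φ₀ (s + 1) = hatFn (4 * s - 1) - hatFn (4 * s - 3) := by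
  rw [φ₀, hatFn_eq_zero_of_one_le (x := 4 * (s + 1) - 1) (by linarith),
    hatFn_eq_zero_of_one_le (x := 4 * (s + 1) - 3) (by linarith)]
  ring_nf

theorem f₁_eq (t : ℝ) : f₁ t = 2 * hatFn (4 * Int.fract t - 1) := by
  have h := tsum_mul_sub_intCast_eq_of_support_subset support_φ₀_subset (fun _ => 1) t
  simp only [one_mul] at h
  rw [f₁, h, φ₀_add_one (Int.fract_nonneg t), φ₀_of_le_one (Int.fract_lt_one t).le]
  ring

theorem f₂_eq (t : ℝ) : f₂ t = (-1) ^ ⌊t⌋ * (2 * hatFn (4 * Int.fract t - 3)) := by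
  rw [f₂, tsum_mul_sub_intCast_eq_of_support_subset support_φ₀_subset,
    φ₀_add_one (Int.fract_nonneg t), φ₀_of_le_one (Int.fract_lt_one t).le,
    zpow_sub₀ (by norm_num), zpow_one]
  ring

theorem f₁_mul_f₂ (t : ℝ) : f₁ t * f₂ t = 0 := by
  rw [f₁_eq, f₂_eq]
  linear_combination (4 * (-1 : ℝ) ^ ⌊t⌋) * hatFn_mul_hatFn_eq_zero (x := 4 * Int.fract t - 1)
    (y := 4 * Int.fract t - 3) (by linarith)

theorem f₁_one_fourth : f₁ (1 / 4) = 2 := by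
  rw [f₁_eq, Int.fract_eq_self.mpr ⟨by norm_num, by norm_num⟩]
  norm_num [hatFn]

theorem f₂_three_fourths : f₂ (3 / 4) = 2 := by
  rw [f₂_eq, Int.fract_eq_self.mpr ⟨by norm_num, by norm_num⟩,
    Int.floor_eq_zero_iff.mpr ⟨by norm_num, by norm_num⟩]
  norm_num [hatFn]

/-- `f₁ + 2f₂` and `f₁ − 2f₂` have the same magnitude everywhere on
`ℝ`, yet `f₁ + 2f₂` is neither `f₁ − 2f₂` nor `−(f₁ − 2f₂)`; hence `f₁ + 2f₂` is
not determined up to a sign by its magnitude measurements on `ℝ`. -/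
theorem stmt7 :
    (∀ t : ℝ, |f₁ t + 2 * f₂ t| = |f₁ t - 2 * f₂ t|) ∧
    (fun t => f₁ t + 2 * f₂ t) ≠ (fun t => f₁ t - 2 * f₂ t) ∧
    (fun t => f₁ t + 2 * f₂ t) ≠ (fun t => -(f₁ t - 2 * f₂ t)) := by
  refine ⟨fun t => ?_, fun h => ?_, fun h => ?_⟩
  · exact abs_add_eq_abs_sub_of_mul_eq_zero (by rw [mul_left_comm, f₁_mul_f₂, mul_zero])
  · have h₃ := congrFun h (3 / 4)
    simp only [f₂_three_fourths] at h₃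
    linarith
  · have h₁ := congrFun h (1 / 4)
    simp only [f₁_one_fourth] at h₁
    linarith
end
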